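/- Let E = EuclideanSpace ℝ (Fin n), N ≥ 1, β ∈ [0, 1), K ≥ 1, and let ξ_1, …, ξ_K ∈ E be unit vectors. Let q̂_k, p̂_k : (Fin N → E) → E (k = 1, …, K) be any functions such that for every sample z : Fin N → E, q̂_k(z) is a minimizer of the empirical loss with parameter u = β • ξ_k and p̂_k(z) is a minimizer of the empirical loss with parameter u = −β • ξ_k. Define the dispersion estimators δ̂₁(z) = max_{k} ‖q̂_k(z) − p̂_k(z)‖ and δ̂₂(z) = (1/K) ∑_{k} ‖q̂_k(z) − p̂_k(z)‖. Then for every sample X : Fin N → E there exists C < ∞ such that for every sample Y differing from X in at most ⌈(1 − β)N/2⌉ − 1 coordinates, δ̂₁(Y) ≤ C and δ̂₂(Y) ≤ C; consequently the breakdown points of δ̂₁ and δ̂₂ at every sample are at least ⌈(1 − β)N/2⌉/N. (Euclidean case of Theorem 5.2: robustness of quantile-based dispersion measures.) -/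

import Mathlib

open MeasureTheory Filter Topology

/-- The data-based geometric quantile loss in Euclidean space:
`ρ_u(x,p) = ‖p − x‖ − ⟪u, p − x⟫`. -/
noncomputable def quantileLoss {n : ℕ} (u x p : EuclideanSpace ℝ (Fin n)) : ℝ :=
  ‖p - x‖ - inner ℝ u (p - x)

/-!
For `‖u‖ ≤ β < 1` the loss `ρ_u(x, ·)` is `(1 + β)`-Lipschitz and grows at least like
`(1 - β)‖· - x‖`. Comparing a minimizer `q` of the corrupted empirical loss with a fixed
point `p`, each of the `m` corrupted observations can favour `q` by at most
`(1 + β)‖q - p‖`, while each clean observation `X i` penalises it by at least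
`(1 - β)‖q - p‖ - 2‖p - X i‖`. Hence `((1 - β)N - 2m)‖q - p‖ ≤ 2 ∑ᵢ ‖p - X i‖`, which bounds
every quantile, and so both dispersion estimators, as long as `2m < (1 - β)N`.
-/

section QuantileLoss

variable {n : ℕ} (u x p q : EuclideanSpace ℝ (Fin n))

theorem quantileLoss_le : quantileLoss u x p ≤ (1 + ‖u‖) * ‖p - x‖ := by
  have := neg_le_of_abs_le (abs_real_inner_le_norm u (p - x))
  rw [quantileLoss]
  linarith

theorem one_sub_norm_mul_le_quantileLoss : (1 - ‖u‖) * ‖p - x‖ ≤ quantileLoss u x p := by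
  have := real_inner_le_norm u (p - x)
  rw [quantileLoss]
  linarith

theorem abs_quantileLoss_sub_le :
    |quantileLoss u x q - quantileLoss u x p| ≤ (1 + ‖u‖) * ‖q - p‖ := by
  have hnorm : |‖q - x‖ - ‖p - x‖| ≤ ‖q - p‖ := by
    simpa using abs_norm_sub_norm_le (q - x) (p - x)
  have hinner : |inner ℝ u (q - x) - inner ℝ u (p - x)| ≤ ‖u‖ * ‖q - p‖ := by
    simpa [← inner_sub_right] using abs_real_inner_le_norm u (q - p)
  calc |quantileLoss u x q - quantileLoss u x p|
      = |(‖q - x‖ - ‖p - x‖) - (inner ℝ u (q - x) - inner ℝ u (p - x))| := by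
        rw [quantileLoss, quantileLoss]; ring_nf
    _ ≤ ‖q - p‖ + ‖u‖ * ‖q - p‖ := (abs_sub _ _).trans (add_le_add hnorm hinner)
    _ = (1 + ‖u‖) * ‖q - p‖ := by ring

end QuantileLoss

-- `y` is the observation that may have replaced the clean one `x`.
theorem sub_le_quantileLoss_sub {n : ℕ} {u : EuclideanSpace ℝ (Fin n)} (hu : ‖u‖ ≤ 1)
    (x y p q : EuclideanSpace ℝ (Fin n)) :
    (1 - ‖u‖) * ‖q - p‖ - 2 * ‖p - x‖ - (if y = x then 0 else 2 * ‖q - p‖)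
      ≤ quantileLoss u y q - quantileLoss u y p := by
  split_ifs with hyx
  · subst hyx
    have htri : ‖q - p‖ ≤ ‖q - y‖ + ‖p - y‖ := by simpa using norm_sub_le (q - y) (p - y)
    nlinarith [one_sub_norm_mul_le_quantileLoss u y q, quantileLoss_le u y p]
  · nlinarith [neg_abs_le (quantileLoss u y q - quantileLoss u y p),
      abs_quantileLoss_sub_le u y p q, norm_nonneg (p - x), norm_nonneg (q - p)]

section Minimizer

variable {n : ℕ} {ι : Type*} [Fintype ι] {u p q : EuclideanSpace ℝ (Fin n)}
  {X Y : ι → EuclideanSpace ℝ (Fin n)}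

theorem mul_norm_sub_le_of_sum_quantileLoss_le (hu : ‖u‖ ≤ 1)
    (hq : ∑ i, quantileLoss u (Y i) q ≤ ∑ i, quantileLoss u (Y i) p) :
    ((1 - ‖u‖) * Fintype.card ι - 2 * {i | Y i ≠ X i}.ncard) * ‖q - p‖
      ≤ 2 * ∑ i, ‖p - X i‖ := by
  have hsum := Finset.sum_le_sum fun i (_ : i ∈ Finset.univ) ↦
    sub_le_quantileLoss_sub hu (X i) (Y i) p q
  have hcorrupted : ∑ i, (if Y i = X i then 0 else 2 * ‖q - p‖)
      = 2 * ‖q - p‖ * {i | Y i ≠ X i}.ncard := by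
    rw [Set.ncard_eq_toFinset_card', Set.toFinset_ofPred, Finset.sum_ite, Finset.sum_const_zero,
      Finset.sum_const, nsmul_eq_mul, zero_add, mul_comm]
  simp only [Finset.sum_sub_distrib, Finset.sum_const, Finset.card_univ, nsmul_eq_mul,
    ← Finset.mul_sum, hcorrupted] at hsum
  linarith

theorem norm_sub_le_of_sum_quantileLoss_le {β m : ℝ} (hu : ‖u‖ ≤ β)
    (hm : ({i | Y i ≠ X i}.ncard : ℝ) ≤ m) (hmβ : 2 * m < (1 - β) * Fintype.card ι)
    (hq : ∑ i, quantileLoss u (Y i) q ≤ ∑ i, quantileLoss u (Y i) p) :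
    ‖q - p‖ ≤ 2 * (∑ i, ‖p - X i‖) / ((1 - β) * Fintype.card ι - 2 * m) := by
  have hβ : β < 1 := by
    by_contra! h
    nlinarith [(Nat.cast_nonneg _ : (0 : ℝ) ≤ {i | Y i ≠ X i}.ncard),
      (Nat.cast_nonneg _ : (0 : ℝ) ≤ Fintype.card ι)]
  rw [le_div_iff₀ (by linarith), mul_comm]
  calc ((1 - β) * Fintype.card ι - 2 * m) * ‖q - p‖
      ≤ ((1 - ‖u‖) * Fintype.card ι - 2 * {i | Y i ≠ X i}.ncard) * ‖q - p‖ := by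
        gcongr
    _ ≤ 2 * ∑ i, ‖p - X i‖ := mul_norm_sub_le_of_sum_quantileLoss_le (hu.trans hβ.le) hq

end Minimizer

theorem dispersion_estimators_breakdown_lower_bound_general
    {n : ℕ} (N : ℕ) [NeZero N]
    (β : ℝ) (hβ : β ∈ Set.Ico (0 : ℝ) 1)
    (K : ℕ)
    (ξ : Fin K → EuclideanSpace ℝ (Fin n)) (hξ : ∀ k, ‖ξ k‖ = 1)
    (qhat phat : Fin K → (Fin N → EuclideanSpace ℝ (Fin n)) → EuclideanSpace ℝ (Fin n))
    (hqhat : ∀ k, ∀ z : Fin N → EuclideanSpace ℝ (Fin n),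
      ∀ p : EuclideanSpace ℝ (Fin n),
        (N : ℝ)⁻¹ * ∑ i, quantileLoss (β • ξ k) (z i) (qhat k z)
          ≤ (N : ℝ)⁻¹ * ∑ i, quantileLoss (β • ξ k) (z i) p)
    (hphat : ∀ k, ∀ z : Fin N → EuclideanSpace ℝ (Fin n),
      ∀ p : EuclideanSpace ℝ (Fin n),
        (N : ℝ)⁻¹ * ∑ i, quantileLoss (-β • ξ k) (z i) (phat k z)
          ≤ (N : ℝ)⁻¹ * ∑ i, quantileLoss (-β • ξ k) (z i) p)
    (δ₁ δ₂ : (Fin N → EuclideanSpace ℝ (Fin n)) → ℝ)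
    (hδ₁ : ∀ z, δ₁ z = ⨆ k, ‖qhat k z - phat k z‖)
    (hδ₂ : ∀ z, δ₂ z = (K : ℝ)⁻¹ * ∑ k, ‖qhat k z - phat k z‖) :
    ∀ X : Fin N → EuclideanSpace ℝ (Fin n), ∃ C : ℝ,
      ∀ Y : Fin N → EuclideanSpace ℝ (Fin n),
        Set.ncard {i : Fin N | Y i ≠ X i} ≤ ⌈(1 - β) * N / 2⌉₊ - 1 →
        δ₁ Y ≤ C ∧ δ₂ Y ≤ C := by
  intro X
  obtain ⟨hβ0, hβ1⟩ := hβ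
  set M := ⌈(1 - β) * N / 2⌉₊ - 1
  have hM : 2 * (M : ℝ) < (1 - β) * N := by
    have hceil : 0 < ⌈(1 - β) * N / 2⌉₊ :=
      Nat.ceil_pos.mpr (by have := NeZero.pos N; positivity)
    linarith [Nat.lt_ceil.mp (show M < ⌈(1 - β) * N / 2⌉₊ by omega)]
  set R := 2 * (∑ i, ‖X i‖) / ((1 - β) * N - 2 * M)
  have hR : 0 ≤ R := div_nonneg (by positivity) (by linarith)
  refine ⟨2 * R, fun Y hY ↦ ?_⟩
  have hquantile : ∀ u q, ‖u‖ = β →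
      (∀ p, (N : ℝ)⁻¹ * ∑ i, quantileLoss u (Y i) q ≤ (N : ℝ)⁻¹ * ∑ i, quantileLoss u (Y i) p) →
      ‖q‖ ≤ R := fun u q hu hq ↦ by
    have hN : (0 : ℝ) < (N : ℝ)⁻¹ := by have := NeZero.pos N; positivity
    simpa using norm_sub_le_of_sum_quantileLoss_le (p := 0) (X := X) hu.le
      (by exact_mod_cast hY) (by simpa using hM) (le_of_mul_le_mul_left (hq 0) hN)
  have hnorm : ∀ (c : ℝ) k, |c| = β → ‖c • ξ k‖ = β := fun c k hc ↦ by
    rw [norm_smul, hξ, Real.norm_eq_abs, hc, mul_one]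
  have hspread : ∀ k, ‖qhat k Y - phat k Y‖ ≤ 2 * R := fun k ↦
    (norm_sub_le _ _).trans <| by
      linarith [hquantile _ _ (hnorm β k (abs_of_nonneg hβ0)) (hqhat k Y),
        hquantile _ _ (hnorm (-β) k (by rw [abs_neg, abs_of_nonneg hβ0])) (hphat k Y)]
  refine ⟨hδ₁ Y ▸ Real.iSup_le hspread (by positivity), hδ₂ Y ▸ ?_⟩
  exact inv_mul_le_of_le_mul₀ (Nat.cast_nonneg K) (by positivity)
    (by simpa using Finset.sum_le_card_nsmul Finset.univ _ _ fun k _ ↦ hspread k)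

/-- Euclidean case of Theorem 5.2: the quantile-based dispersion estimators
`δ̂₁(z) = max_k ‖q̂_k(z) − p̂_k(z)‖` and `δ̂₂(z) = (1/K) ∑_k ‖q̂_k(z) − p̂_k(z)‖` remain
bounded under corruption of at most `⌈(1 − β)N/2⌉ − 1` data points; hence their
breakdown points are at least `⌈(1 − β)N/2⌉/N` at every sample. -/
theorem dispersion_estimators_breakdown_lower_bound
    {n : ℕ} (N : ℕ) [NeZero N]
    (β : ℝ) (hβ : β ∈ Set.Ico (0 : ℝ) 1)
    (K : ℕ) [NeZero K]
    (ξ : Fin K → EuclideanSpace ℝ (Fin n)) (hξ : ∀ k, ‖ξ k‖ = 1)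
    (qhat phat : Fin K → (Fin N → EuclideanSpace ℝ (Fin n)) → EuclideanSpace ℝ (Fin n))
    (hqhat : ∀ k, ∀ z : Fin N → EuclideanSpace ℝ (Fin n),
      ∀ p : EuclideanSpace ℝ (Fin n),
        (N : ℝ)⁻¹ * ∑ i, quantileLoss (β • ξ k) (z i) (qhat k z)
          ≤ (N : ℝ)⁻¹ * ∑ i, quantileLoss (β • ξ k) (z i) p)
    (hphat : ∀ k, ∀ z : Fin N → EuclideanSpace ℝ (Fin n),
      ∀ p : EuclideanSpace ℝ (Fin n),
        (N : ℝ)⁻¹ * ∑ i, quantileLoss (-β • ξ k) (z i) (phat k z)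
          ≤ (N : ℝ)⁻¹ * ∑ i, quantileLoss (-β • ξ k) (z i) p)
    (δ₁ δ₂ : (Fin N → EuclideanSpace ℝ (Fin n)) → ℝ)
    (hδ₁ : ∀ z, δ₁ z = ⨆ k, ‖qhat k z - phat k z‖)
    (hδ₂ : ∀ z, δ₂ z = (K : ℝ)⁻¹ * ∑ k, ‖qhat k z - phat k z‖) :
    ∀ X : Fin N → EuclideanSpace ℝ (Fin n), ∃ C : ℝ,
      ∀ Y : Fin N → EuclideanSpace ℝ (Fin n),
        Set.ncard {i : Fin N | Y i ≠ X i} ≤ ⌈(1 - β) * N / 2⌉₊ - 1 →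
        δ₁ Y ≤ C ∧ δ₂ Y ≤ C :=
  dispersion_estimators_breakdown_lower_bound_general N β hβ K ξ hξ qhat phat hqhat hphat δ₁ δ₂ hδ₁
    hδ₂
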